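/- arXiv:math/0002180 — 2 statements merged into one kernel-verified Lean document; each statement's English description precedes it below -/
import Mathlib

section
/- Let (L, ⊗, I) be a symmetric monoidal category possessing a terminal object 1. The terminal object carries a unique monoid structure (via the unique morphisms I → 1 and 1 ⊗ 1 → 1), making the endofunctor 1 ⊗ − a monad on L. For every category M with finite products, the category of colax symmetric monoidal functors (L, ⊗, I) → (M, ×, 1) and monoidal transformations is isomorphic to the category of functors from the Kleisli category of the monad 1 ⊗ − to M and natural transformations. -/
open CategoryTheory MonoidalCategory Limits

universe v₁ v₂ u₁ u₂

structure ColaxMonoidalFunctor (C : Type*) (D : Type*) [Category C] [Category D]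
    [MonoidalCategory C] [MonoidalCategory D] where
  F : C ⥤ D
  ε : F.obj (𝟙_ C) ⟶ 𝟙_ D
  δ : ∀ X Y : C, F.obj (X ⊗ Y) ⟶ F.obj X ⊗ F.obj Y
  δ_natural : ∀ {X₁ Y₁ X₂ Y₂ : C} (f : X₁ ⟶ X₂) (g : Y₁ ⟶ Y₂),
    F.map (f ⊗ₘ g) ≫ δ X₂ Y₂ = δ X₁ Y₁ ≫ (F.map f ⊗ₘ F.map g)
  assoc : ∀ X Y Z : C,
    δ (X ⊗ Y) Z ≫ (δ X Y ▷ F.obj Z) ≫ (α_ (F.obj X) (F.obj Y) (F.obj Z)).hom =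
      F.map (α_ X Y Z).hom ≫ δ X (Y ⊗ Z) ≫ (F.obj X ◁ δ Y Z)
  left_unit : ∀ X : C,
    δ (𝟙_ C) X ≫ (ε ▷ F.obj X) ≫ (λ_ (F.obj X)).hom = F.map (λ_ X).hom
  right_unit : ∀ X : C,
    δ X (𝟙_ C) ≫ (F.obj X ◁ ε) ≫ (ρ_ (F.obj X)).hom = F.map (ρ_ X).hom

/-- A colax symmetric monoidal functor: a colax monoidal functor whose coherence maps
commute with the symmetries. -/
structure ColaxSymmetricMonoidalFunctor (C : Type*) (D : Type*) [Category C]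
    [Category D] [MonoidalCategory C] [MonoidalCategory D]
    [SymmetricCategory C] [SymmetricCategory D] extends ColaxMonoidalFunctor C D where
  symm : ∀ X Y : C, δ X Y ≫ (β_ (F.obj X) (F.obj Y)).hom = F.map (β_ X Y).hom ≫ δ Y X

/-- The category of colax symmetric monoidal functors and monoidal transformations. -/
instance ColaxSymmetricMonoidalFunctor.instCategory (C : Type*) (D : Type*) [Category C]
    [Category D] [MonoidalCategory C] [MonoidalCategory D]
    [SymmetricCategory C] [SymmetricCategory D] :
    Category (ColaxSymmetricMonoidalFunctor C D) where
  Hom X Y := { α : X.F ⟶ Y.F //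
      α.app (𝟙_ C) ≫ Y.ε = X.ε ∧
      ∀ A B : C, α.app (A ⊗ B) ≫ Y.δ A B = X.δ A B ≫ (α.app A ⊗ₘ α.app B) }
  id X := ⟨𝟙 X.F, by simp, by simp⟩
  comp {X Y Z} f g := ⟨f.1 ≫ g.1, by
      simp only [NatTrans.comp_app, Category.assoc, g.2.1, f.2.1], by
      intro A B
      simp only [NatTrans.comp_app, Category.assoc, g.2.2]
      rw [← Category.assoc, f.2.2, Category.assoc, MonoidalCategory.tensorHom_comp_tensorHom]⟩
  id_comp f := Subtype.ext (Category.id_comp f.1)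
  comp_id f := Subtype.ext (Category.comp_id f.1)
  assoc f g h := Subtype.ext (Category.assoc f.1 g.1 h.1)

noncomputable section CKAux
namespace CKAux
variable (L : Type u₁) [Category.{v₁} L] [MonoidalCategory L] [SymmetricCategory L] [HasTerminal L]

def Tm : CategoryTheory.Monad L where
  toFunctor := tensorLeft (⊤_ L)
  η :=
    { app := fun X => (λ_ X).inv ≫ (terminal.from (𝟙_ L) ▷ X)
      naturality := by
        intro X Y f
        simp only [Functor.id_obj, Functor.id_map, curriedTensor_obj_obj, curriedTensor_obj_map, Category.assoc]
        rw [leftUnitor_inv_naturality_assoc, whisker_exchange] }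
  μ :=
    { app := fun X => (α_ (⊤_ L) (⊤_ L) X).inv ≫ (terminal.from ((⊤_ L) ⊗ (⊤_ L)) ▷ X)
      naturality := by
        intro X Y f
        simp only [Functor.comp_obj, Functor.comp_map, curriedTensor_obj_obj, curriedTensor_obj_map,
          Category.assoc]
        rw [associator_inv_naturality_right_assoc, whisker_exchange] }
  assoc := by
    intro X
    simp only [curriedTensor_obj_obj, curriedTensor_obj_map, MonoidalCategory.whiskerLeft_comp, Category.assoc]
    rw [associator_inv_naturality_middle_assoc, ← comp_whiskerRight, terminal.comp_from,
      associator_inv_naturality_left_assoc, ← comp_whiskerRight, terminal.comp_from,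
      ← pentagon_inv_assoc, ← comp_whiskerRight, terminal.comp_from]
  left_unit := by
    intro X
    simp only [curriedTensor_obj_obj, Category.assoc]
    rw [associator_inv_naturality_left_assoc, ← comp_whiskerRight, terminal.comp_from,
      Subsingleton.elim (terminal.from ((𝟙_ L) ⊗ (⊤_ L))) (λ_ (⊤_ L)).hom]
    rw [leftUnitor_tensor_inv]
    simp [← comp_whiskerRight]
  right_unit := by
    intro X
    simp only [curriedTensor_obj_obj, curriedTensor_obj_map, MonoidalCategory.whiskerLeft_comp, Category.assoc]
    rw [associator_inv_naturality_middle_assoc, ← comp_whiskerRight, terminal.comp_from,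
      Subsingleton.elim (terminal.from ((⊤_ L) ⊗ (𝟙_ L))) (ρ_ (⊤_ L)).hom]
    simp

variable {L}

/-- Identity-on-objects inclusion into the Kleisli category. -/
abbrev k (T : CategoryTheory.Monad L) (X : L) : Kleisli T :=
  (Kleisli.Adjunction.toKleisli T).obj X

/-- a morphism of `L` into `T.obj B`, seen as a Kleisli morphism. -/
abbrev km {T : CategoryTheory.Monad L} {A B : L} (f : A ⟶ T.obj B) : k T A ⟶ k T B :=
  Kleisli.Hom.mk f

lemma kleisli_comp_def {T : CategoryTheory.Monad L} {A B D : L}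
    (f : k T A ⟶ k T B) (g : k T B ⟶ k T D) :
    (f ≫ g : k T A ⟶ k T D)
      = km (f.of ≫ T.map g.of ≫ T.μ.app D : A ⟶ T.obj D) := rfl

lemma toKleisli_map_comp {T : CategoryTheory.Monad L} {A B D : L}
    (f : A ⟶ B) (g : k T B ⟶ k T D) :
    ((Kleisli.Adjunction.toKleisli T).map f ≫ g : k T A ⟶ k T D)
      = km (f ≫ g.of : A ⟶ T.obj D) := by
  obtain ⟨g⟩ := g
  change B ⟶ T.obj D at g
  apply Kleisli.hom_ext
  show (f ≫ T.η.app B) ≫ T.map g ≫ T.μ.app D = f ≫ g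
  rw [Category.assoc, ← T.η.naturality_assoc g, Functor.id_map, Monad.left_unit,
    Category.comp_id]

lemma comp_toKleisli_map {T : CategoryTheory.Monad L} {A B D : L}
    (f : k T A ⟶ k T B) (g : B ⟶ D) :
    (f ≫ (Kleisli.Adjunction.toKleisli T).map g : k T A ⟶ k T D)
      = km (f.of ≫ T.map g : A ⟶ T.obj D) := by
  obtain ⟨f⟩ := f
  change A ⟶ T.obj B at f
  apply Kleisli.hom_ext
  show f ≫ T.map (g ≫ T.η.app D) ≫ T.μ.app D = f ≫ T.map g
  rw [Functor.map_comp, Category.assoc, Monad.right_unit]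
  simp

/-- first Kleisli projection -/
def p1 (A B : L) : k (Tm L) (A ⊗ B) ⟶ k (Tm L) A :=
  km ((β_ A B).hom ≫ (terminal.from B ▷ A) : A ⊗ B ⟶ (⊤_ L) ⊗ A)

/-- second Kleisli projection -/
def p2 (A B : L) : k (Tm L) (A ⊗ B) ⟶ k (Tm L) B :=
  km (terminal.from A ▷ B : A ⊗ B ⟶ (⊤_ L) ⊗ B)

@[simp] lemma Tm_obj (X : L) : (Tm L).toFunctor.obj X = (⊤_ L) ⊗ X := rfl
@[simp] lemma Tm_map {X Y : L} (f : X ⟶ Y) : (Tm L).toFunctor.map f = (⊤_ L) ◁ f := rfl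
@[simp] lemma Tm_eta (X : L) :
    (Tm L).η.app X = (λ_ X).inv ≫ (terminal.from (𝟙_ L) ▷ X) := rfl
@[simp] lemma Tm_mu (X : L) :
    (Tm L).μ.app X = (α_ (⊤_ L) (⊤_ L) X).inv ≫ (terminal.from ((⊤_ L) ⊗ (⊤_ L)) ▷ X) := rfl

/-- shorthand for the Kleisli inclusion functor -/
abbrev tK : L ⥤ Kleisli (Tm L) := Kleisli.Adjunction.toKleisli (Tm L)

lemma hexE2 (X Y Z : L) :
    (β_ (X ⊗ Y) Z).hom ≫ (α_ Z X Y).inv ≫ ((β_ Z X).hom ▷ Y) =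
      (α_ X Y Z).hom ≫ (X ◁ (β_ Y Z).hom) ≫ (α_ X Z Y).inv := by
  have h := BraidedCategory.hexagon_reverse X Y Z
  rw [Iso.inv_comp_eq] at h
  rw [reassoc_of% h]
  simp only [Category.assoc, ← comp_whiskerRight, SymmetricCategory.symmetry,
    MonoidalCategory.id_whiskerRight, Category.comp_id]

lemma hexE1 (X Y Z : L) :
    (β_ (X ⊗ Y) Z).hom ≫ (Z ◁ (β_ X Y).hom) ≫ (α_ Z Y X).inv ≫ ((β_ Z Y).hom ▷ X) =
      (α_ X Y Z).hom ≫ (β_ X (Y ⊗ Z)).hom := by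
  rw [← BraidedCategory.braiding_naturality_left_assoc]
  have h := BraidedCategory.hexagon_reverse Y X Z
  rw [Iso.inv_comp_eq] at h
  rw [reassoc_of% h]
  simp only [Category.assoc, ← comp_whiskerRight, SymmetricCategory.symmetry,
    MonoidalCategory.id_whiskerRight, Category.comp_id]
  rw [← BraidedCategory.hexagon_forward_assoc]
  simp

lemma N1 {A₁ B₁ A₂ B₂ : L} (f : A₁ ⟶ A₂) (g : B₁ ⟶ B₂) :
    tK.map (f ⊗ₘ g) ≫ p1 A₂ B₂ = p1 A₁ B₁ ≫ tK.map f := by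
  rw [toKleisli_map_comp, comp_toKleisli_map]
  apply Kleisli.hom_ext
  show (f ⊗ₘ g) ≫ (β_ A₂ B₂).hom ≫ (terminal.from B₂ ▷ A₂)
    = ((β_ A₁ B₁).hom ≫ (terminal.from B₁ ▷ A₁)) ≫ ((⊤_ L) ◁ f)
  rw [BraidedCategory.braiding_naturality_assoc]
  simp only [Category.assoc, ← tensorHom_id, ← id_tensorHom, tensorHom_comp_tensorHom,
    terminal.comp_from, Category.comp_id, Category.id_comp]

lemma N2 {A₁ B₁ A₂ B₂ : L} (f : A₁ ⟶ A₂) (g : B₁ ⟶ B₂) :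
    tK.map (f ⊗ₘ g) ≫ p2 A₂ B₂ = p2 A₁ B₁ ≫ tK.map g := by
  rw [toKleisli_map_comp, comp_toKleisli_map]
  apply Kleisli.hom_ext
  show (f ⊗ₘ g) ≫ (terminal.from A₂ ▷ B₂) = (terminal.from A₁ ▷ B₁) ≫ ((⊤_ L) ◁ g)
  simp only [← tensorHom_id, ← id_tensorHom, tensorHom_comp_tensorHom,
    terminal.comp_from, Category.comp_id, Category.id_comp]

lemma E3 (X Y Z : L) :
    p2 (X ⊗ Y) Z = tK.map (α_ X Y Z).hom ≫ p2 X (Y ⊗ Z) ≫ p2 Y Z := by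
  rw [kleisli_comp_def (p2 X (Y ⊗ Z)) (p2 Y Z), toKleisli_map_comp (α_ X Y Z).hom]
  apply Kleisli.hom_ext
  show terminal.from (X ⊗ Y) ▷ Z = (α_ X Y Z).hom ≫ (terminal.from X ▷ (Y ⊗ Z)) ≫
    ((⊤_ L) ◁ (terminal.from Y ▷ Z)) ≫
      ((α_ (⊤_ L) (⊤_ L) Z).inv ≫ (terminal.from ((⊤_ L) ⊗ (⊤_ L)) ▷ Z))
  rw [← whisker_exchange_assoc, associator_inv_naturality_left_assoc,
    ← comp_whiskerRight, terminal.comp_from, associator_inv_naturality_middle_assoc,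
    ← comp_whiskerRight, terminal.comp_from, Iso.hom_inv_id_assoc]

lemma E2 (X Y Z : L) :
    p1 (X ⊗ Y) Z ≫ p2 X Y = tK.map (α_ X Y Z).hom ≫ p2 X (Y ⊗ Z) ≫ p1 Y Z := by
  rw [kleisli_comp_def (p1 (X ⊗ Y) Z) (p2 X Y), kleisli_comp_def (p2 X (Y ⊗ Z)) (p1 Y Z),
    toKleisli_map_comp (α_ X Y Z).hom]
  apply Kleisli.hom_ext
  show ((β_ (X ⊗ Y) Z).hom ≫ (terminal.from Z ▷ (X ⊗ Y))) ≫
      ((⊤_ L) ◁ (terminal.from X ▷ Y)) ≫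
      ((α_ (⊤_ L) (⊤_ L) Y).inv ≫ (terminal.from ((⊤_ L) ⊗ (⊤_ L)) ▷ Y))
    = (α_ X Y Z).hom ≫ (terminal.from X ▷ (Y ⊗ Z)) ≫
      ((⊤_ L) ◁ ((β_ Y Z).hom ≫ (terminal.from Z ▷ Y))) ≫
      ((α_ (⊤_ L) (⊤_ L) Y).inv ≫ (terminal.from ((⊤_ L) ⊗ (⊤_ L)) ▷ Y))
  rw [Category.assoc, ← whisker_exchange_assoc, associator_inv_naturality_left_assoc,
    ← comp_whiskerRight, terminal.comp_from, associator_inv_naturality_middle_assoc,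
    ← comp_whiskerRight, terminal.comp_from]
  rw [← whisker_exchange_assoc, associator_inv_naturality_left_assoc,
    ← comp_whiskerRight, terminal.comp_from, MonoidalCategory.whiskerLeft_comp_assoc,
    associator_inv_naturality_middle_assoc, ← comp_whiskerRight, terminal.comp_from]
  rw [Subsingleton.elim (terminal.from (Z ⊗ X)) ((β_ Z X).hom ≫ terminal.from (X ⊗ Z)),
    comp_whiskerRight]
  rw [reassoc_of% (hexE2 X Y Z)]

lemma E1 (X Y Z : L) :
    p1 (X ⊗ Y) Z ≫ p1 X Y = tK.map (α_ X Y Z).hom ≫ p1 X (Y ⊗ Z) := by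
  rw [kleisli_comp_def (p1 (X ⊗ Y) Z) (p1 X Y), toKleisli_map_comp (α_ X Y Z).hom]
  apply Kleisli.hom_ext
  show ((β_ (X ⊗ Y) Z).hom ≫ (terminal.from Z ▷ (X ⊗ Y))) ≫
      ((⊤_ L) ◁ ((β_ X Y).hom ≫ (terminal.from Y ▷ X))) ≫
      ((α_ (⊤_ L) (⊤_ L) X).inv ≫ (terminal.from ((⊤_ L) ⊗ (⊤_ L)) ▷ X))
    = (α_ X Y Z).hom ≫ (β_ X (Y ⊗ Z)).hom ≫ (terminal.from (Y ⊗ Z) ▷ X)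
  rw [Category.assoc, ← whisker_exchange_assoc, associator_inv_naturality_left_assoc,
    ← comp_whiskerRight, terminal.comp_from, MonoidalCategory.whiskerLeft_comp_assoc,
    associator_inv_naturality_middle_assoc, ← comp_whiskerRight, terminal.comp_from]
  rw [Subsingleton.elim (terminal.from (Z ⊗ Y)) ((β_ Z Y).hom ≫ terminal.from (Y ⊗ Z)),
    comp_whiskerRight]
  rw [reassoc_of% (hexE1 X Y Z)]

lemma E4 (X : L) : p2 (𝟙_ L) X = tK.map (λ_ X).hom := by
  apply Kleisli.hom_ext
  show terminal.from (𝟙_ L) ▷ X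
    = (λ_ X).hom ≫ ((λ_ X).inv ≫ (terminal.from (𝟙_ L) ▷ X))
  rw [Iso.hom_inv_id_assoc]

lemma E5 (X : L) : p1 X (𝟙_ L) = tK.map (ρ_ X).hom := by
  apply Kleisli.hom_ext
  show (β_ X (𝟙_ L)).hom ≫ (terminal.from (𝟙_ L) ▷ X)
    = (ρ_ X).hom ≫ ((λ_ X).inv ≫ (terminal.from (𝟙_ L) ▷ X))
  rw [← braiding_leftUnitor X]
  simp

lemma E6a (X Y : L) : tK.map (β_ X Y).hom ≫ p1 Y X = p2 X Y := by
  rw [toKleisli_map_comp]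
  apply Kleisli.hom_ext
  show (β_ X Y).hom ≫ (β_ Y X).hom ≫ (terminal.from X ▷ Y) = terminal.from X ▷ Y
  rw [SymmetricCategory.symmetry_assoc]

lemma E6b (X Y : L) : tK.map (β_ X Y).hom ≫ p2 Y X = p1 X Y := by
  rw [toKleisli_map_comp]
  apply Kleisli.hom_ext
  rfl

lemma E7 {A B : L} (g : A ⟶ (⊤_ L) ⊗ B) :
    tK.map g ≫ p2 (⊤_ L) B = km g := by
  rw [toKleisli_map_comp g (p2 (⊤_ L) B)]
  apply Kleisli.hom_ext
  show g ≫ (terminal.from (⊤_ L) ▷ B) = g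
  rw [Subsingleton.elim (terminal.from (⊤_ L)) (𝟙 (⊤_ L))]
  simp

variable {M : Type u₂} [Category.{v₂} M] [HasFiniteProducts M]

attribute [local instance] CartesianMonoidalCategory.ofHasFiniteProducts
  BraidedCategory.ofCartesianMonoidalCategory

open CartesianMonoidalCategory

lemma key1 (Xf : ColaxSymmetricMonoidalFunctor L M) {A B : L} (u : A ⟶ ⊤_ L) :
    Xf.F.map (u ▷ B) ≫ Xf.δ (⊤_ L) B ≫ snd _ _ = Xf.δ A B ≫ snd _ _ := by
  rw [← tensorHom_id]
  rw [reassoc_of% (Xf.δ_natural u (𝟙 B))]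
  simp

lemma key1' (Xf : ColaxSymmetricMonoidalFunctor L M) (A B : L) :
    Xf.F.map ((β_ A B).hom ≫ (terminal.from B ▷ A)) ≫ Xf.δ (⊤_ L) A ≫ snd _ _ =
      Xf.δ A B ≫ fst _ _ := by
  rw [Functor.map_comp, Category.assoc, key1]
  have h := Xf.symm A B
  rw [← reassoc_of% h]
  simp

lemma keyL (Xf : ColaxSymmetricMonoidalFunctor L M) (B : L) :
    Xf.δ (𝟙_ L) B ≫ snd _ _ = Xf.F.map (λ_ B).hom := by
  have h := Xf.left_unit B
  rw [← h]
  simp [leftUnitor_hom]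

lemma keyR (Xf : ColaxSymmetricMonoidalFunctor L M) (B : L) :
    Xf.δ B (𝟙_ L) ≫ fst _ _ = Xf.F.map (ρ_ B).hom := by
  have h := Xf.right_unit B
  rw [← h]
  simp [rightUnitor_hom]

lemma key2 (Xf : ColaxSymmetricMonoidalFunctor L M) (X Y Z : L) :
    Xf.δ (X ⊗ Y) Z ≫ snd _ _ =
      Xf.F.map (α_ X Y Z).hom ≫ Xf.δ X (Y ⊗ Z) ≫ snd _ _ ≫ Xf.δ Y Z ≫ snd _ _ := by
  have h := congrArg (fun m => m ≫ (snd _ _ ≫ snd _ _)) (Xf.assoc X Y Z)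
  simpa using h

lemma key4 (Xf : ColaxSymmetricMonoidalFunctor L M) {W B C' : L} (g : B ⟶ C') :
    Xf.F.map (W ◁ g) ≫ Xf.δ W C' ≫ snd _ _ = Xf.δ W B ≫ snd _ _ ≫ Xf.F.map g := by
  rw [← id_tensorHom]
  rw [reassoc_of% (Xf.δ_natural (𝟙 W) g)]
  simp


def Fmap (Xf : ColaxSymmetricMonoidalFunctor L M) {A B : L} (f : A ⟶ (⊤_ L) ⊗ B) :
    Xf.F.obj A ⟶ Xf.F.obj B :=
  Xf.F.map f ≫ Xf.δ (⊤_ L) B ≫ snd _ _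

lemma key2' (Xf : ColaxSymmetricMonoidalFunctor L M) (X Y Z : L) :
    Xf.F.map (α_ X Y Z).inv ≫ Xf.δ (X ⊗ Y) Z ≫ snd _ _ =
      Xf.δ X (Y ⊗ Z) ≫ snd _ _ ≫ Xf.δ Y Z ≫ snd _ _ := by
  rw [key2, ← Functor.map_comp_assoc, Iso.inv_hom_id, CategoryTheory.Functor.map_id,
    Category.id_comp]

lemma Fmap_eta (Xf : ColaxSymmetricMonoidalFunctor L M) (A : L) :
    Fmap Xf ((λ_ A).inv ≫ (terminal.from (𝟙_ L) ▷ A)) = 𝟙 (Xf.F.obj A) := by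
  unfold Fmap
  rw [Functor.map_comp, Category.assoc, key1, keyL, ← Functor.map_comp, Iso.inv_hom_id,
    CategoryTheory.Functor.map_id]

lemma Fmap_comp (Xf : ColaxSymmetricMonoidalFunctor L M) {A B C : L}
    (f : A ⟶ (⊤_ L) ⊗ B) (g : B ⟶ (⊤_ L) ⊗ C) :
    Fmap Xf (f ≫ ((⊤_ L) ◁ g ≫ ((α_ (⊤_ L) (⊤_ L) C).inv ≫
      (terminal.from ((⊤_ L) ⊗ (⊤_ L)) ▷ C)))) = Fmap Xf f ≫ Fmap Xf g := by
  unfold Fmap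
  simp only [Functor.map_comp, Category.assoc]
  rw [key1, key2' Xf (⊤_ L) (⊤_ L) C, reassoc_of% (key4 Xf g)]

def Fobj (Xf : ColaxSymmetricMonoidalFunctor L M) : Kleisli (Tm L) ⥤ M where
  obj A := Xf.F.obj A.of
  map {A B} f := Fmap Xf f.of
  map_id A := Fmap_eta Xf A.of
  map_comp {A B C} f g := Fmap_comp Xf f.of g.of

def Gobj (H : Kleisli (Tm L) ⥤ M) : ColaxSymmetricMonoidalFunctor L M where
  F := tK ⋙ H
  ε := toUnit _
  δ A B := lift (H.map (p1 A B)) (H.map (p2 A B))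
  δ_natural {A₁ B₁ A₂ B₂} f g := by
    apply CartesianMonoidalCategory.hom_ext
    · simp only [Functor.comp_obj, Functor.comp_map, 
        Category.assoc, lift_fst, tensorHom_fst, tensorHom_fst_assoc, lift_fst_assoc,
        Category.comp_id, ← Functor.map_comp]
      rw [N1]
    · simp only [Functor.comp_obj, Functor.comp_map, 
        Category.assoc, lift_snd, tensorHom_snd, tensorHom_snd_assoc, lift_snd_assoc,
        Category.comp_id, ← Functor.map_comp]
      rw [N2]
  assoc X Y Z := by
    apply CartesianMonoidalCategory.hom_ext
    · simp only [Functor.comp_obj, Functor.comp_map, 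
        whiskerRight_fst, whiskerRight_fst_assoc, whiskerRight_snd, whiskerRight_snd_assoc, whiskerLeft_fst, whiskerLeft_fst_assoc, whiskerLeft_snd, whiskerLeft_snd_assoc,
        associator_hom_fst, associator_hom_snd_fst, associator_hom_snd_snd,
          associator_hom_fst_assoc, associator_hom_snd_fst_assoc, associator_hom_snd_snd_assoc, Category.assoc,
        lift_fst, lift_snd, tensorHom_fst, tensorHom_snd,
        tensorHom_fst_assoc, tensorHom_snd_assoc,
        lift_fst_assoc, lift_snd_assoc, comp_lift, Category.comp_id,
        ← Functor.map_comp]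
      rw [E1]
    · apply CartesianMonoidalCategory.hom_ext
      · simp only [Functor.comp_obj, Functor.comp_map, 
          whiskerRight_fst, whiskerRight_fst_assoc, whiskerRight_snd, whiskerRight_snd_assoc, whiskerLeft_fst, whiskerLeft_fst_assoc, whiskerLeft_snd, whiskerLeft_snd_assoc,
          associator_hom_fst, associator_hom_snd_fst, associator_hom_snd_snd,
          associator_hom_fst_assoc, associator_hom_snd_fst_assoc, associator_hom_snd_snd_assoc, Category.assoc,
          lift_fst, lift_snd, tensorHom_fst, tensorHom_snd,
          tensorHom_fst_assoc, tensorHom_snd_assoc,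
          lift_fst_assoc, lift_snd_assoc, comp_lift, Category.comp_id,
          ← Functor.map_comp]
        rw [E2]
      · simp only [Functor.comp_obj, Functor.comp_map, 
          whiskerRight_fst, whiskerRight_fst_assoc, whiskerRight_snd, whiskerRight_snd_assoc, whiskerLeft_fst, whiskerLeft_fst_assoc, whiskerLeft_snd, whiskerLeft_snd_assoc,
          associator_hom_fst, associator_hom_snd_fst, associator_hom_snd_snd,
          associator_hom_fst_assoc, associator_hom_snd_fst_assoc, associator_hom_snd_snd_assoc, Category.assoc,
          lift_fst, lift_snd, tensorHom_fst, tensorHom_snd,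
          tensorHom_fst_assoc, tensorHom_snd_assoc,
          lift_fst_assoc, lift_snd_assoc, comp_lift, Category.comp_id,
          ← Functor.map_comp]
        rw [E3]
  left_unit X := by
    simp only [Functor.comp_obj, Functor.comp_map, 
      whiskerRight_snd_assoc, leftUnitor_hom,
      Category.assoc, tensorHom_snd_assoc, lift_snd_assoc, lift_snd, Category.comp_id]
    rw [E4]
    simp
  right_unit X := by
    simp only [Functor.comp_obj, Functor.comp_map, 
      whiskerLeft_fst_assoc, rightUnitor_hom,
      Category.assoc, tensorHom_fst_assoc, lift_fst_assoc, lift_fst, Category.comp_id]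
    rw [E5]
    simp
  symm X Y := by
    apply CartesianMonoidalCategory.hom_ext
    · simp only [Functor.comp_obj, Functor.comp_map, Category.assoc,
        lift_fst,
        lift_snd, lift_fst_assoc, lift_snd_assoc, braiding_hom_fst, braiding_hom_snd, Category.comp_id,
        ← Functor.map_comp]
      rw [E6a]
    · simp only [Functor.comp_obj, Functor.comp_map, Category.assoc,
        lift_fst,
        lift_snd, lift_fst_assoc, lift_snd_assoc, braiding_hom_fst, braiding_hom_snd, Category.comp_id,
        ← Functor.map_comp]
      rw [E6b]

def Ffun : ColaxSymmetricMonoidalFunctor L M ⥤ (Kleisli (Tm L) ⥤ M) where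
  obj := Fobj
  map {X Y} a :=
    { app := fun A => a.1.app A.of
      naturality := by
        intro A B f
        obtain ⟨f⟩ := f
        change A.of ⟶ (⊤_ L) ⊗ B.of at f
        show Fmap X f ≫ a.1.app B.of = a.1.app A.of ≫ Fmap Y f
        unfold Fmap
        rw [← a.1.naturality_assoc, reassoc_of% (a.2.2 (⊤_ L) B.of)]
        simp }
  map_id X := by
    apply NatTrans.ext
    funext A
    rfl
  map_comp f g := by
    apply NatTrans.ext
    funext A
    rfl

def Gfun : (Kleisli (Tm L) ⥤ M) ⥤ ColaxSymmetricMonoidalFunctor L M where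
  obj := Gobj
  map {H H'} θ :=
    ⟨Functor.whiskerLeft tK θ, toUnit_unique _ _, by
      intro A B
      apply CartesianMonoidalCategory.hom_ext
      · simp only [Gobj, Functor.whiskerLeft_app, Category.assoc, lift_fst,
          tensorHom_fst, lift_fst_assoc]
        exact (θ.naturality (p1 A B)).symm
      · simp only [Gobj, Functor.whiskerLeft_app, Category.assoc, lift_snd,
          tensorHom_snd, lift_snd_assoc]
        exact (θ.naturality (p2 A B)).symm⟩
  map_id H := by
    apply Subtype.ext
    apply NatTrans.ext
    funext A
    rfl
  map_comp f g := by
    apply Subtype.ext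
    apply NatTrans.ext
    funext A
    rfl

lemma Fmap_lift (Xf : ColaxSymmetricMonoidalFunctor L M) {A B : L} (f : A ⟶ B) :
    Fmap Xf (f ≫ ((λ_ B).inv ≫ (terminal.from (𝟙_ L) ▷ B))) = Xf.F.map f := by
  have h := Fmap_eta Xf B
  unfold Fmap at h ⊢
  rw [Functor.map_comp, Category.assoc, h, Category.comp_id]

lemma CSMF_ext {X Y : ColaxSymmetricMonoidalFunctor L M} (hF : X.F = Y.F)
    (hδ : ∀ A B : L, X.δ A B ≫
          eqToHom (show (X.F.obj A ⊗ X.F.obj B : M) = (Y.F.obj A ⊗ Y.F.obj B : M) by rw [hF])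
        = eqToHom (show X.F.obj (A ⊗ B) = Y.F.obj (A ⊗ B) by rw [hF]) ≫ Y.δ A B) :
    X = Y := by
  obtain ⟨⟨F₁, ε₁, δ₁, h₁, h₂, h₃, h₄⟩, hs⟩ := X
  obtain ⟨⟨F₂, ε₂, δ₂, h₁', h₂', h₃', h₄'⟩, hs'⟩ := Y
  obtain rfl : F₁ = F₂ := hF
  obtain rfl : ε₁ = ε₂ := toUnit_unique _ _
  obtain rfl : δ₁ = δ₂ := by
    funext A B
    simpa using hδ A B
  rfl

lemma Gobj_Fobj (Xf : ColaxSymmetricMonoidalFunctor L M) : Gobj (Fobj Xf) = Xf := by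
  apply CSMF_ext
  case hF =>
    refine CategoryTheory.Functor.ext (fun A => rfl) ?_
    · intro A B f
      refine Eq.trans ?_ ((Category.id_comp _).trans (Category.comp_id _)).symm
      show Fmap Xf (f ≫ ((λ_ B).inv ≫ (terminal.from (𝟙_ L) ▷ B))) = Xf.F.map f
      exact Fmap_lift Xf f
  case hδ =>
    intro A B
    refine (Category.comp_id _).trans (Eq.trans ?_ (Category.id_comp (Xf.δ A B)).symm)
    show lift (Fmap Xf (p1 A B).of) (Fmap Xf (p2 A B).of) = Xf.δ A B
    apply CartesianMonoidalCategory.hom_ext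
    · rw [lift_fst]
      exact key1' Xf A B
    · rw [lift_snd]
      exact key1 Xf (terminal.from A)

lemma Fobj_Gobj_map (H : Kleisli (Tm L) ⥤ M) {A B : L} (g : A ⟶ (⊤_ L) ⊗ B) :
    H.map (tK.map g) ≫ lift (H.map (p1 (⊤_ L) B)) (H.map (p2 (⊤_ L) B)) ≫ snd _ _
      = H.map (km g) := by
  rw [lift_snd, ← H.map_comp, E7]

lemma Fobj_Gobj (H : Kleisli (Tm L) ⥤ M) : Fobj (Gobj H) = H := by
  refine CategoryTheory.Functor.ext (fun A => rfl) ?_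
  · intro A B f
    refine Eq.trans ?_ ((Category.id_comp _).trans (Category.comp_id _)).symm
    exact Fobj_Gobj_map H f.of

lemma CSMF_eqToHom_app {X Y : ColaxSymmetricMonoidalFunctor L M} (h : X = Y) (A : L) :
    (eqToHom h).1.app A = eqToHom (by rw [h]) := by
  subst h; rfl

lemma FGF : Ffun ⋙ Gfun = 𝟭 (ColaxSymmetricMonoidalFunctor L M) := by
  refine CategoryTheory.Functor.ext (fun X => Gobj_Fobj X) ?_
  · intro X Y a
    apply Subtype.ext
    apply NatTrans.ext
    funext A
    show a.1.app A = ((eqToHom (Gobj_Fobj X)).1 ≫ a.1 ≫ (eqToHom (Gobj_Fobj Y).symm).1).app A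
    simp [CSMF_eqToHom_app]
    exact ((Category.id_comp _).trans (Category.comp_id _)).symm

lemma GFG : Gfun ⋙ Ffun = 𝟭 (Kleisli (Tm L) ⥤ M) := by
  refine CategoryTheory.Functor.ext (fun H => Fobj_Gobj H) ?_
  · intro H H' θ
    apply NatTrans.ext
    funext A
    show θ.app A = ((eqToHom (Fobj_Gobj H)) ≫ θ ≫ (eqToHom (Fobj_Gobj H').symm)).app A
    simp [eqToHom_app]
    exact ((Category.id_comp _).trans (Category.comp_id _)).symm

end CKAux
end CKAux

/-- **Colax symmetric monoidal functors out of `L` are functors on the Kleisli category of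
`1 ⊗ −`.**  Let `L` be a symmetric monoidal category with a terminal object `1`.  The terminal
object carries a (unique) monoid structure via the unique morphisms `I → 1` and `1 ⊗ 1 → 1`,
making `1 ⊗ −` into a monad `T` on `L`; and for every category `M` with finite products,
the category of colax symmetric monoidal functors `(L, ⊗, I) → (M, ×, 1)` and monoidal
transformations is isomorphic to the category of functors from the Kleisli category of `T`
to `M` and natural transformations. -/
theorem colaxSymmetricMonoidalFunctor_iso_kleisli_functors
    (L : Type u₁) [Category.{v₁} L] [MonoidalCategory L] [SymmetricCategory L] [HasTerminal L]
    (M : Type u₂) [Category.{v₂} M] [HasFiniteProducts M] :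
    letI : MonoidalCategory M := (CartesianMonoidalCategory.ofHasFiniteProducts (C := M)).toMonoidalCategory
    letI : SymmetricCategory M := @CartesianMonoidalCategory.toSymmetricCategory M _
      CartesianMonoidalCategory.ofHasFiniteProducts
      (@BraidedCategory.ofCartesianMonoidalCategory M _ CartesianMonoidalCategory.ofHasFiniteProducts)
    ∃ (T : Monad L) (h : T.toFunctor = tensorLeft (⊤_ L)),
      (∀ X : L, T.η.app X =
          ((λ_ X).inv ≫ (terminal.from (𝟙_ L) ▷ X)) ≫
            eqToHom (show (⊤_ L) ⊗ X = T.toFunctor.obj X by rw [h]; rfl)) ∧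
      (∀ X : L, T.μ.app X =
          eqToHom (show T.toFunctor.obj (T.toFunctor.obj X) = (⊤_ L) ⊗ ((⊤_ L) ⊗ X) by
            rw [h]; rfl) ≫
          (α_ (⊤_ L) (⊤_ L) X).inv ≫ (terminal.from ((⊤_ L) ⊗ (⊤_ L)) ▷ X) ≫
            eqToHom (show (⊤_ L) ⊗ X = T.toFunctor.obj X by rw [h]; rfl)) ∧
      ∃ (F : ColaxSymmetricMonoidalFunctor L M ⥤ (Kleisli T ⥤ M))
        (G : (Kleisli T ⥤ M) ⥤ ColaxSymmetricMonoidalFunctor L M),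
        F ⋙ G = 𝟭 (ColaxSymmetricMonoidalFunctor L M) ∧ G ⋙ F = 𝟭 (Kleisli T ⥤ M) := by
  refine ⟨CKAux.Tm L, rfl, fun X => ?_, fun X => ?_, CKAux.Ffun, CKAux.Gfun,
    CKAux.FGF, CKAux.GFG⟩
  · exact (Category.comp_id _).symm
  · show (CKAux.Tm L).μ.app X = _
    rw [CKAux.Tm_mu]
    exact ((Category.id_comp _).trans
      (congrArg ((α_ (⊤_ L) (⊤_ L) X).inv ≫ ·) (Category.comp_id _))).symm
end

section
/- Let (M, ×, 1) be a category with finite products equipped with a class of equivalences, and let Y: (Δ⁺)^op → M be a simplicial object in M. Then the following two conditions are equivalent: (i) for all m, n ≥ 0 the map (Y(α¹_{m,n}), Y(α²_{m,n})): Y[m+n] → Y[m] × Y[n] is an equivalence, and the unique map Y[0] → 1 is an equivalence; (ii) for all n ≥ 0 the Segal map (Y(β₀ⁿ), …, Y(β_{n−1}ⁿ)): Y[n] → Y[1]ⁿ is an equivalence. A simplicial object satisfying these equivalent conditions is called a special simplicial object in M; under the correspondence between simplicial objects in M and colax monoidal functors (Δ, +, 0) → (M, ×, 1), the special simplicial objects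 are exactly those whose corresponding colax monoidal functor has all coherence maps equivalences (i.e. the homotopy monoids in M). -/
open CategoryTheory Limits Simplicial

universe v u

namespace SpecialSimplicial

/-- The order-preserving map `α¹_{m,n} : [m] → [m+n]`, `i ↦ i`. -/
def alpha1 (m n : ℕ) : (⦋m⦌ : SimplexCategory) ⟶ ⦋m + n⦌ :=
  SimplexCategory.mkHom ⟨Fin.castLE (by omega), fun a b h => h⟩

/-- The order-preserving map `α²_{m,n} : [n] → [m+n]`, `i ↦ m + i`. -/
def alpha2 (m n : ℕ) : (⦋n⦌ : SimplexCategory) ⟶ ⦋m + n⦌ :=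
  SimplexCategory.mkHom
    ⟨fun i => ⟨m + i, by have := i.isLt; omega⟩,
      fun a b h => Nat.add_le_add_left h m⟩

/-- For `0 ≤ j < n`, the order-preserving map `βⱼⁿ : [1] → [n]`, `i ↦ i + j`. -/
def beta (n : ℕ) (j : Fin n) : (⦋1⦌ : SimplexCategory) ⟶ ⦋n⦌ :=
  SimplexCategory.mkHom
    ⟨fun i => ⟨i + j, by have := i.isLt; have := j.isLt; omega⟩,
      fun a b h => Nat.add_le_add_right h j⟩

lemma beta_comp_alpha1 (m n : ℕ) (j : Fin m) :
    beta m j ≫ alpha1 m n = beta (m + n) (Fin.castAdd n j) := by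
  apply SimplexCategory.Hom.ext
  ext i
  simp [beta, alpha1, SimplexCategory.mkHom, SimplexCategory.comp_toOrderHom]
  rfl

lemma beta_comp_alpha2 (m n : ℕ) (j : Fin n) :
    beta n j ≫ alpha2 m n = beta (m + n) (Fin.natAdd m j) := by
  apply SimplexCategory.Hom.ext
  ext i
  simp [beta, alpha2, SimplexCategory.mkHom, SimplexCategory.comp_toOrderHom]
  change m + ((i : ℕ) + j) = i + (m + j)
  omega

lemma beta_one (j : Fin 1) : beta 1 j = 𝟙 (⦋1⦌ : SimplexCategory) := by
  apply SimplexCategory.Hom.ext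
  ext i
  have : j = 0 := Subsingleton.elim _ _
  subst this
  simp [beta, SimplexCategory.mkHom]

end SpecialSimplicial

/-- A class of equivalences in a cartesian monoidal category `(M, ×, 1)`: it contains all
isomorphisms (E1), satisfies the 2-out-of-3 property (E2), and is closed under binary products
of morphisms (E3, for the cartesian monoidal structure). -/
structure CartesianEquivalenceClass (M : Type u) [Category.{v} M] [HasFiniteProducts M] where
  E : MorphismProperty M
  iso_mem : ∀ {A B : M} (f : A ⟶ B), IsIso f → E f
  two_of_three_left : ∀ {A B C : M} (f : A ⟶ B) (g : B ⟶ C), E f → E (f ≫ g) → E g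
  two_of_three_right : ∀ {A B C : M} (f : A ⟶ B) (g : B ⟶ C), E g → E (f ≫ g) → E f
  comp_mem : ∀ {A B C : M} (f : A ⟶ B) (g : B ⟶ C), E f → E g → E (f ≫ g)
  prod_mem : ∀ {A A' B B' : M} (f : A ⟶ B) (f' : A' ⟶ B'), E f → E f' → E (prod.map f f')

section Aux

variable {M : Type u} [Category.{v} M] [HasFiniteProducts M]

/-- Splitting map for a product indexed by `Fin (m+n)`. -/
noncomputable def finProdSplit (X : M) (m n : ℕ) :
    (∏ᶜ fun _ : Fin (m + n) => X) ⟶ (∏ᶜ fun _ : Fin m => X) ⨯ (∏ᶜ fun _ : Fin n => X) :=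
  prod.lift (Pi.lift fun j => Pi.π _ (Fin.castAdd n j))
    (Pi.lift fun j => Pi.π _ (Fin.natAdd m j))

noncomputable def finProdMerge (X : M) (m n : ℕ) :
    (∏ᶜ fun _ : Fin m => X) ⨯ (∏ᶜ fun _ : Fin n => X) ⟶ (∏ᶜ fun _ : Fin (m + n) => X) :=
  Pi.lift fun i : Fin (m + n) =>
    if h : (i : ℕ) < m then prod.fst ≫ Pi.π _ (⟨i, h⟩ : Fin m)
    else prod.snd ≫ Pi.π _ (⟨(i : ℕ) - m, by have := i.isLt; omega⟩ : Fin n)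

instance finProdSplit_isIso (X : M) (m n : ℕ) : IsIso (finProdSplit X m n) := by
  refine ⟨finProdMerge X m n, ?_, ?_⟩
  · apply Pi.hom_ext
    intro i
    simp only [finProdSplit, finProdMerge, Category.assoc, limit.lift_π, Fan.mk_π_app,
      Category.id_comp]
    by_cases h : (i : ℕ) < m
    · rw [dif_pos h]
      simp only [prod.lift_fst_assoc, limit.lift_π, Fan.mk_π_app]
      (try congr 1) <;> (try ext) <;> (try simp) <;> (try omega)
    · rw [dif_neg h]
      simp only [prod.lift_snd_assoc, limit.lift_π, Fan.mk_π_app]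
      (try congr 1) <;> (try ext) <;> (try simp) <;> (try omega)
  · apply Limits.prod.hom_ext
    · apply Pi.hom_ext
      intro j
      simp only [finProdSplit, finProdMerge, Category.assoc, prod.lift_fst, limit.lift_π,
        Fan.mk_π_app, BinaryFan.π_app_left, BinaryFan.mk_fst, Category.id_comp]
      rw [dif_pos (by simpa using j.isLt)]
      (try congr 2) <;> (try ext) <;> (try simp) <;> (try omega)
    · apply Pi.hom_ext
      intro j
      simp only [finProdSplit, finProdMerge, Category.assoc, prod.lift_snd, limit.lift_π,
        Fan.mk_π_app, BinaryFan.π_app_right, BinaryFan.mk_snd, Category.id_comp]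
      rw [dif_neg (by simp)]
      (try congr 2) <;> (try ext) <;> (try simp) <;> (try omega)

open SpecialSimplicial in
lemma key_eq (Y : SimplexCategoryᵒᵖ ⥤ M) (m n : ℕ) :
    (Pi.lift fun j : Fin (m + n) => Y.map (beta (m + n) j).op) ≫
        finProdSplit (Y.obj (Opposite.op ⦋1⦌)) m n =
      prod.lift (Y.map (alpha1 m n).op) (Y.map (alpha2 m n).op) ≫
        prod.map (Pi.lift fun j : Fin m => Y.map (beta m j).op)
          (Pi.lift fun j : Fin n => Y.map (beta n j).op) := by
  apply Limits.prod.hom_ext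
  · apply Pi.hom_ext
    intro j
    simp [finProdSplit, ← Y.map_comp, ← op_comp, beta_comp_alpha1]
    erw [prod.lift_fst_assoc, prod.lift_fst_assoc]
    simp [← Y.map_comp, ← op_comp, beta_comp_alpha1]
  · apply Pi.hom_ext
    intro j
    simp [finProdSplit, ← Y.map_comp, ← op_comp, beta_comp_alpha2]
    erw [prod.lift_snd_assoc, prod.lift_snd_assoc]
    simp [← Y.map_comp, ← op_comp, beta_comp_alpha2]

/-- The product over `Fin 0` is terminal. -/
lemma isIso_from_pi_zero (X Z : M) :
    IsIso (terminal.from (∏ᶜ fun _ : Fin 0 => X)) := by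
  refine ⟨Pi.lift (fun j : Fin 0 => j.elim0), ?_, ?_⟩
  · apply Pi.hom_ext; intro j; exact j.elim0
  · apply terminal.hom_ext

open SpecialSimplicial in
instance segal_one_isIso (Y : SimplexCategoryᵒᵖ ⥤ M) :
    IsIso (Pi.lift fun j : Fin 1 => Y.map (beta 1 j).op) := by
  refine ⟨Pi.π _ (0 : Fin 1), ?_, ?_⟩
  · simp [beta_one, op_id]
  · apply Pi.hom_ext
    intro j
    have : j = 0 := Subsingleton.elim _ _
    subst this
    simp [beta_one, op_id]

end Aux

open SpecialSimplicial

/-- **Characterization of special simplicial objects.**  For a simplicial object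
`Y : (Δ⁺)ᵒᵖ ⥤ M` in a category with finite products equipped with a class of equivalences,
the following are equivalent: (i) all the maps
`(Y α¹_{m,n}, Y α²_{m,n}) : Y[m+n] → Y[m] × Y[n]` and the unique map `Y[0] → 1` are
equivalences; (ii) all the Segal maps `(Y β₀ⁿ, …, Y β_{n-1}ⁿ) : Y[n] → Y[1]ⁿ` are
equivalences.  Condition (i) says exactly that the colax monoidal functor
`(Δ, +, 0) → (M, ×, 1)` corresponding to `Y` has all its coherence maps equivalences, i.e. is
a homotopy monoid in `M`; a simplicial object satisfying these conditions is called a special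
simplicial object in `M`. -/
theorem simplicialObject_special_iff (M : Type u) [Category.{v} M] [HasFiniteProducts M]
    (𝒠 : CartesianEquivalenceClass M) (Y : SimplexCategoryᵒᵖ ⥤ M) :
    ((∀ m n : ℕ, 𝒠.E (prod.lift (Y.map (SpecialSimplicial.alpha1 m n).op)
          (Y.map (SpecialSimplicial.alpha2 m n).op))) ∧
        𝒠.E (terminal.from (Y.obj (Opposite.op ⦋0⦌)))) ↔
      (∀ n : ℕ, 𝒠.E (Pi.lift fun j : Fin n => Y.map (SpecialSimplicial.beta n j).op)) := by
  constructor
  · rintro ⟨hb, ht⟩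
    intro n
    induction n with
    | zero =>
        -- Segal map for n = 0: compose with the iso to the terminal object
        have h0 : (Pi.lift fun j : Fin 0 => Y.map (beta 0 j).op) ≫
            terminal.from (∏ᶜ fun _ : Fin 0 => Y.obj (Opposite.op ⦋1⦌))
            = terminal.from (Y.obj (Opposite.op ⦋0⦌)) := terminal.hom_ext _ _
        refine 𝒠.two_of_three_right _ _ (𝒠.iso_mem _ (isIso_from_pi_zero _ (Y.obj (Opposite.op ⦋0⦌)))) ?_
        rw [h0]; exact ht
    | succ n ih =>
        have hkey := key_eq Y n 1
        have hR : 𝒠.E ((Pi.lift fun j : Fin (n + 1) => Y.map (beta (n + 1) j).op) ≫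
            finProdSplit (Y.obj (Opposite.op ⦋1⦌)) n 1) := by
          rw [hkey]
          exact 𝒠.comp_mem _ _ (hb n 1)
            (𝒠.prod_mem _ _ ih (𝒠.iso_mem _ (segal_one_isIso Y)))
        exact 𝒠.two_of_three_right _ _
          (𝒠.iso_mem _ (finProdSplit_isIso (Y.obj (Opposite.op ⦋1⦌)) n 1)) hR
  · intro hs
    constructor
    · intro m n
      have hkey := key_eq Y m n
      have hL : 𝒠.E ((Pi.lift fun j : Fin (m + n) => Y.map (beta (m + n) j).op) ≫
          finProdSplit (Y.obj (Opposite.op ⦋1⦌)) m n) :=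
        𝒠.comp_mem _ _ (hs (m + n)) (𝒠.iso_mem _ (finProdSplit_isIso _ m n))
      rw [hkey] at hL
      exact 𝒠.two_of_three_right _ _ (𝒠.prod_mem _ _ (hs m) (hs n)) hL
    · have h0 : (Pi.lift fun j : Fin 0 => Y.map (beta 0 j).op) ≫
          terminal.from (∏ᶜ fun _ : Fin 0 => Y.obj (Opposite.op ⦋1⦌))
          = terminal.from (Y.obj (Opposite.op ⦋0⦌)) := terminal.hom_ext _ _
      rw [← h0]
      exact 𝒠.comp_mem _ _ (hs 0)
        (𝒠.iso_mem _ (isIso_from_pi_zero _ (Y.obj (Opposite.op ⦋0⦌))))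
end
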